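/- arXiv:2002.07250 — 6 statements merged into one kernel-verified Lean document; each statement's English description precedes it below -/
import Mathlib

section
/- Let x be the unique real number in (0,1) such that 2·arcsin-amplitude trisection holds, i.e., x = sin Φ where F(Φ,k) = K(k)/3. Then x satisfies the quartic equation k²x⁴ − 2k²x³ + 2x − 1 = 0. Concretely: if k ∈ (0,1) and Φ ∈ (0, π/2) satisfy 3·∫₀^Φ dφ/√(1 − k² sin²φ) = ∫₀^{π/2} dψ/√(1 − k² sin²ψ), then x = sin Φ satisfies k²x⁴ − 2k²x³ + 2x − 1 = 0. -/
/-!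
Write `Δ φ = √(1 - k² sin² φ)`, so that `F' = 1 / Δ`. The changes of amplitude
`tan φ tan ψ = 1 / √(1 - k²)` and `tan (ψ / 2) = Δ φ tan φ` satisfy `ψ' Δ φ = -Δ ψ` and
`ψ' Δ φ = 2 Δ ψ` respectively, hence `F φ + F ψ = K` and `F ψ = 2 F φ`. If `3 F Φ = K`, both send
`Φ` to an amplitude with `F = 2 F Φ = K - F Φ`, so they agree there since `F` is injective.
Comparing sines, `2 sin Φ cos Φ Δ / (1 - k² sin⁴ Φ) = cos Φ / Δ`, i.e.
`2 sin Φ Δ² = 1 - k² sin⁴ Φ`, and `Δ² = 1 - k² sin² Φ` turns this into the quartic.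
-/

open Real Set

noncomputable section

def ellipticDelta (k φ : ℝ) : ℝ := √(1 - k ^ 2 * sin φ ^ 2)

def ellipticF (k Φ : ℝ) : ℝ := ∫ φ in (0 : ℝ)..Φ, 1 / ellipticDelta k φ

def complementaryAmplitude (k φ : ℝ) : ℝ := π / 2 - arctan (√(1 - k ^ 2) * tan φ)

def doubleAmplitude (k φ : ℝ) : ℝ := 2 * arctan (ellipticDelta k φ * tan φ)

end

@[simp]
theorem ellipticF_zero (k : ℝ) : ellipticF k 0 = 0 :=
  intervalIntegral.integral_same

@[simp]
theorem complementaryAmplitude_zero (k : ℝ) : complementaryAmplitude k 0 = π / 2 := by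
  simp [complementaryAmplitude]

@[simp]
theorem doubleAmplitude_zero (k : ℝ) : doubleAmplitude k 0 = 0 := by
  simp [doubleAmplitude]

theorem sin_two_mul_arctan (y : ℝ) : sin (2 * arctan y) = 2 * y / (1 + y ^ 2) := by
  have h : √(1 + y ^ 2) ^ 2 = 1 + y ^ 2 := sq_sqrt (by positivity)
  rw [sin_two_mul, sin_arctan, cos_arctan]
  field_simp
  rw [h]

section EllipticIntegral

variable {k : ℝ}

theorem sq_sqrt_one_sub_sq (hk : k ^ 2 ≤ 1) : √(1 - k ^ 2) ^ 2 = 1 - k ^ 2 :=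
  sq_sqrt (by linarith)

theorem one_sub_sq_mul_sin_sq_pos (hk : k ^ 2 < 1) (φ : ℝ) : 0 < 1 - k ^ 2 * sin φ ^ 2 := by
  nlinarith [mul_le_of_le_one_right (sq_nonneg k) (sin_sq_le_one φ)]

theorem one_sub_sq_mul_sin_pow_four_pos (hk : k ^ 2 < 1) (φ : ℝ) :
    0 < 1 - k ^ 2 * sin φ ^ 4 := by
  have h := one_sub_sq_mul_sin_sq_pos hk φ
  nlinarith [mul_le_of_le_one_right (sq_nonneg (sin φ)) (sin_sq_le_one φ), sq_nonneg k]

theorem ellipticDelta_pos (hk : k ^ 2 < 1) (φ : ℝ) : 0 < ellipticDelta k φ :=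
  sqrt_pos.2 (one_sub_sq_mul_sin_sq_pos hk φ)

theorem sq_ellipticDelta (hk : k ^ 2 < 1) (φ : ℝ) :
    ellipticDelta k φ ^ 2 = 1 - k ^ 2 * sin φ ^ 2 :=
  sq_sqrt (one_sub_sq_mul_sin_sq_pos hk φ).le

theorem cos_sq_add_sq_ellipticDelta_mul_sin_sq (hk : k ^ 2 < 1) (φ : ℝ) :
    cos φ ^ 2 + ellipticDelta k φ ^ 2 * sin φ ^ 2 = 1 - k ^ 2 * sin φ ^ 4 := by
  linear_combination sin φ ^ 2 * sq_ellipticDelta hk φ + sin_sq_add_cos_sq φ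

theorem hasDerivAt_ellipticDelta (hk : k ^ 2 < 1) (φ : ℝ) :
    HasDerivAt (ellipticDelta k) (-(k ^ 2 * sin φ * cos φ) / ellipticDelta k φ) φ := by
  have h := (((hasDerivAt_sin φ).fun_pow 2).const_mul (k ^ 2)).const_sub 1
  refine (h.sqrt (one_sub_sq_mul_sin_sq_pos hk φ).ne').congr_deriv ?_
  rw [ellipticDelta]
  field_simp
  ring

theorem hasDerivAt_ellipticF (hk : k ^ 2 < 1) (φ : ℝ) :
    HasDerivAt (ellipticF k) (1 / ellipticDelta k φ) φ :=
  have hcont : Continuous fun φ ↦ 1 / ellipticDelta k φ :=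
    continuous_const.div (by unfold ellipticDelta; fun_prop) fun φ ↦ (ellipticDelta_pos hk φ).ne'
  (hcont.integral_hasStrictDerivAt 0 φ).hasDerivAt

theorem ellipticF_strictMono (hk : k ^ 2 < 1) : StrictMono (ellipticF k) :=
  strictMono_of_deriv_pos fun φ ↦ by
    rw [(hasDerivAt_ellipticF hk φ).deriv]
    exact one_div_pos.2 (ellipticDelta_pos hk φ)

theorem ellipticF_comp_sub_mul_eq {s : Set ℝ} {g g' : ℝ → ℝ} (c : ℝ) (hk : k ^ 2 < 1)
    (hs : IsOpen s) (hs' : IsPreconnected s) (hg : ∀ φ ∈ s, HasDerivAt g (g' φ) φ)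
    (hrel : ∀ φ ∈ s, g' φ * ellipticDelta k φ = c * ellipticDelta k (g φ))
    {φ ψ : ℝ} (hφ : φ ∈ s) (hψ : ψ ∈ s) :
    ellipticF k (g φ) - c * ellipticF k φ = ellipticF k (g ψ) - c * ellipticF k ψ := by
  have hderiv : ∀ φ ∈ s, HasDerivAt (fun φ ↦ ellipticF k (g φ) - c * ellipticF k φ) 0 φ := by
    intro φ hφ
    refine (((hasDerivAt_ellipticF hk (g φ)).comp φ (hg φ hφ)).sub
      ((hasDerivAt_ellipticF hk φ).const_mul c)).congr_deriv ?_
    have hΔ := ellipticDelta_pos hk φ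
    have hΔg := ellipticDelta_pos hk (g φ)
    field_simp
    linarith [hrel φ hφ]
  exact hs.is_const_of_deriv_eq_zero hs'
    (fun φ hφ ↦ (hderiv φ hφ).differentiableAt.differentiableWithinAt)
    (fun φ hφ ↦ (hderiv φ hφ).deriv) hφ hψ

theorem hasDerivAt_complementaryAmplitude (hk : k ^ 2 < 1) {φ : ℝ} (hφ : cos φ ≠ 0) :
    HasDerivAt (complementaryAmplitude k) (-√(1 - k ^ 2) / ellipticDelta k φ ^ 2) φ := by
  refine ((((hasDerivAt_tan hφ).const_mul √(1 - k ^ 2)).arctan).const_sub (π / 2)).congr_deriv ?_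
  have hΔ := ellipticDelta_pos hk φ
  rw [tan_eq_sin_div_cos]
  field_simp
  linear_combination -√(1 - k ^ 2) * sq_ellipticDelta hk φ
    + √(1 - k ^ 2) * sin φ ^ 2 * sq_sqrt_one_sub_sq hk.le + √(1 - k ^ 2) * sin_sq_add_cos_sq φ

theorem sin_complementaryAmplitude (hk : k ^ 2 < 1) {φ : ℝ} (hφ : 0 < cos φ) :
    sin (complementaryAmplitude k φ) = cos φ / ellipticDelta k φ := by
  have hΔ := ellipticDelta_pos hk φ
  have h : 1 + (√(1 - k ^ 2) * tan φ) ^ 2 = (ellipticDelta k φ / cos φ) ^ 2 := by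
    rw [tan_eq_sin_div_cos, div_pow, sq_ellipticDelta hk]
    field_simp
    linear_combination sin φ ^ 2 * sq_sqrt_one_sub_sq hk.le + sin_sq_add_cos_sq φ
  rw [complementaryAmplitude, sin_pi_div_two_sub, cos_arctan, h, sqrt_sq (by positivity),
    one_div_div]

theorem ellipticDelta_complementaryAmplitude (hk : k ^ 2 < 1) {φ : ℝ} (hφ : 0 < cos φ) :
    ellipticDelta k (complementaryAmplitude k φ) = √(1 - k ^ 2) / ellipticDelta k φ := by
  have hΔ := ellipticDelta_pos hk φ
  have h : 1 - k ^ 2 * (cos φ / ellipticDelta k φ) ^ 2 =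
      (√(1 - k ^ 2) / ellipticDelta k φ) ^ 2 := by
    field_simp
    linear_combination sq_ellipticDelta hk φ - sq_sqrt_one_sub_sq hk.le - k ^ 2 * sin_sq_add_cos_sq φ
  rw [ellipticDelta, sin_complementaryAmplitude hk hφ, h, sqrt_sq (by positivity)]

theorem ellipticF_add_ellipticF_complementaryAmplitude (hk : k ^ 2 < 1) {φ : ℝ}
    (hφ : φ ∈ Ioo (-(π / 2)) (π / 2)) :
    ellipticF k φ + ellipticF k (complementaryAmplitude k φ) = ellipticF k (π / 2) := by
  have h := ellipticF_comp_sub_mul_eq (-1) hk isOpen_Ioo isPreconnected_Ioo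
    (fun φ hφ ↦ hasDerivAt_complementaryAmplitude hk (cos_pos_of_mem_Ioo hφ).ne')
    (fun φ hφ ↦ by
      have hΔ := ellipticDelta_pos hk φ
      rw [ellipticDelta_complementaryAmplitude hk (cos_pos_of_mem_Ioo hφ)]
      field_simp)
    hφ (show (0 : ℝ) ∈ Ioo (-(π / 2)) (π / 2) by constructor <;> linarith [pi_pos])
  rw [complementaryAmplitude_zero, ellipticF_zero] at h
  linarith

theorem hasDerivAt_doubleAmplitude (hk : k ^ 2 < 1) {φ : ℝ} (hφ : cos φ ≠ 0) :
    HasDerivAt (doubleAmplitude k)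
      (2 * (1 - 2 * k ^ 2 * sin φ ^ 2 + k ^ 2 * sin φ ^ 4) /
        ((1 - k ^ 2 * sin φ ^ 4) * ellipticDelta k φ)) φ := by
  have hΔ := ellipticDelta_pos hk φ
  have hP : 1 - sin φ ^ 4 * k ^ 2 ≠ 0 := by linarith [one_sub_sq_mul_sin_pow_four_pos hk φ]
  have hy : HasDerivAt (fun x ↦ ellipticDelta k x * tan x)
      ((1 - 2 * k ^ 2 * sin φ ^ 2 + k ^ 2 * sin φ ^ 4) / (ellipticDelta k φ * cos φ ^ 2)) φ := by
    refine ((hasDerivAt_ellipticDelta hk φ).mul (hasDerivAt_tan hφ)).congr_deriv ?_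
    rw [tan_eq_sin_div_cos]
    field_simp
    linear_combination sq_ellipticDelta hk φ - k ^ 2 * sin φ ^ 2 * sin_sq_add_cos_sq φ
  refine (hy.arctan.const_mul 2).congr_deriv ?_
  rw [tan_eq_sin_div_cos]
  field_simp
  linear_combination -(1 - 2 * sin φ ^ 2 * k ^ 2 + sin φ ^ 4 * k ^ 2) *
    cos_sq_add_sq_ellipticDelta_mul_sin_sq hk φ

theorem sin_doubleAmplitude (hk : k ^ 2 < 1) {φ : ℝ} (hφ : cos φ ≠ 0) :
    sin (doubleAmplitude k φ) =
      2 * sin φ * cos φ * ellipticDelta k φ / (1 - k ^ 2 * sin φ ^ 4) := by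
  have hP : 1 - sin φ ^ 4 * k ^ 2 ≠ 0 := by linarith [one_sub_sq_mul_sin_pow_four_pos hk φ]
  rw [doubleAmplitude, sin_two_mul_arctan, tan_eq_sin_div_cos]
  field_simp
  linear_combination -(ellipticDelta k φ * sin φ) * cos_sq_add_sq_ellipticDelta_mul_sin_sq hk φ

theorem ellipticDelta_doubleAmplitude (hk : k ^ 2 < 1) {φ : ℝ} (hφ : cos φ ≠ 0) :
    ellipticDelta k (doubleAmplitude k φ) =
      (1 - 2 * k ^ 2 * sin φ ^ 2 + k ^ 2 * sin φ ^ 4) / (1 - k ^ 2 * sin φ ^ 4) := by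
  have hP := one_sub_sq_mul_sin_pow_four_pos hk φ
  have hr : 0 ≤ 1 - 2 * k ^ 2 * sin φ ^ 2 + k ^ 2 * sin φ ^ 4 := by
    nlinarith [sq_nonneg (1 - k ^ 2 * sin φ ^ 2),
      mul_nonneg (sq_nonneg k) (pow_nonneg (sq_nonneg (sin φ)) 2)]
  have h : 1 - k ^ 2 * (2 * sin φ * cos φ * ellipticDelta k φ / (1 - k ^ 2 * sin φ ^ 4)) ^ 2 =
      ((1 - 2 * k ^ 2 * sin φ ^ 2 + k ^ 2 * sin φ ^ 4) / (1 - k ^ 2 * sin φ ^ 4)) ^ 2 := by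
    field_simp
    linear_combination -4 * k ^ 2 * sin φ ^ 2 * cos φ ^ 2 * sq_ellipticDelta hk φ
      - 4 * k ^ 2 * sin φ ^ 2 * (1 - k ^ 2 * sin φ ^ 2) * sin_sq_add_cos_sq φ
  rw [ellipticDelta, sin_doubleAmplitude hk hφ, h, sqrt_sq (by positivity)]

theorem ellipticF_doubleAmplitude (hk : k ^ 2 < 1) {φ : ℝ} (hφ : φ ∈ Ioo (-(π / 2)) (π / 2)) :
    ellipticF k (doubleAmplitude k φ) = 2 * ellipticF k φ := by
  have h := ellipticF_comp_sub_mul_eq 2 hk isOpen_Ioo isPreconnected_Ioo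
    (fun φ hφ ↦ hasDerivAt_doubleAmplitude hk (cos_pos_of_mem_Ioo hφ).ne')
    (fun φ hφ ↦ by
      have hΔ := ellipticDelta_pos hk φ
      have hP := one_sub_sq_mul_sin_pow_four_pos hk φ
      rw [ellipticDelta_doubleAmplitude hk (cos_pos_of_mem_Ioo hφ).ne']
      field_simp)
    hφ (show (0 : ℝ) ∈ Ioo (-(π / 2)) (π / 2) by constructor <;> linarith [pi_pos])
  rw [doubleAmplitude_zero, ellipticF_zero] at h
  linarith

end EllipticIntegral

theorem legendre_trisection_quartic (k Φ : ℝ) (hk : k ∈ Set.Ioo (0:ℝ) 1)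
    (hΦ : Φ ∈ Set.Ioo (0:ℝ) (π/2))
    (h : 3 * ∫ φ in (0:ℝ)..Φ, 1 / Real.sqrt (1 - k^2 * Real.sin φ ^ 2)
       = ∫ ψ in (0:ℝ)..(π/2), 1 / Real.sqrt (1 - k^2 * Real.sin ψ ^ 2)) :
    k^2 * Real.sin Φ ^ 4 - 2 * k^2 * Real.sin Φ ^ 3 + 2 * Real.sin Φ - 1 = 0 := by
  have hk' : k ^ 2 < 1 := by nlinarith [hk.1, hk.2]
  have hΦ' : Φ ∈ Ioo (-(π / 2)) (π / 2) := ⟨by linarith [hΦ.1, pi_pos], hΦ.2⟩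
  have hc : 0 < cos Φ := cos_pos_of_mem_Ioo hΦ'
  have htri : 3 * ellipticF k Φ = ellipticF k (π / 2) := h
  have hcompl := ellipticF_add_ellipticF_complementaryAmplitude hk' hΦ'
  have hdouble := ellipticF_doubleAmplitude hk' hΦ'
  have hamp : doubleAmplitude k Φ = complementaryAmplitude k Φ :=
    (ellipticF_strictMono hk').injective (by linarith)
  have hsin := congrArg sin hamp
  rw [sin_doubleAmplitude hk' hc.ne', sin_complementaryAmplitude hk' hc,
    div_eq_div_iff (one_sub_sq_mul_sin_pow_four_pos hk' Φ).ne' (ellipticDelta_pos hk' Φ).ne']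
    at hsin
  have hquartic : 2 * sin Φ * ellipticDelta k Φ ^ 2 = 1 - k ^ 2 * sin Φ ^ 4 :=
    mul_left_cancel₀ hc.ne' (by linear_combination hsin)
  linear_combination hquartic - 2 * sin Φ * sq_ellipticDelta hk' Φ
end

section
/- If k² = (2 + √3)/4 (i.e., k = cos(π/12)) and x ∈ (0,1) satisfies the trisection quartic k²x⁴ − 2k²x³ + 2x − 1 = 0, then with Φ = arcsin x one has tan Φ = √(2/√3). -/
open Real

theorem trisection_case_cos (k x : ℝ) (hk2 : k^2 = (2 + Real.sqrt 3) / 4)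
    (hx : x ∈ Set.Ioo (0:ℝ) 1)
    (h : k^2 * x^4 - 2 * k^2 * x^3 + 2 * x - 1 = 0) :
    Real.tan (Real.arcsin x) = Real.sqrt (2 / Real.sqrt 3) := by
  obtain ⟨hx0, hx1⟩ := hx
  set s := Real.sqrt 3 with hs_def
  have hs : s ^ 2 = 3 := Real.sq_sqrt (by norm_num)
  have hs_pos : (0:ℝ) < s := Real.sqrt_pos.mpr (by norm_num)
  have hs_lb : (1.7:ℝ) < s := by nlinarith
  have hs_ub : s < 1.8 := by nlinarith
  -- factor the quartic
  have hfac : (x - (s - 1)) * ((2+s)*x^3 + (2+s)*(s-3)*x^2 + (2+s)*(6-4*s)*x + 2*(s+1)) = 0 := by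
    linear_combination 4*h + (8*x^3 - 4*x^4)*hk2 + (-(2+s)*x^2 + (4*s-2)*x - 2)*hs
  have hQ : (2+s)*x^3 + (2+s)*(s-3)*x^2 + (2+s)*(6-4*s)*x + 2*(s+1) > 0 := by
    nlinarith [sq_nonneg x, sq_nonneg (x-1), mul_pos hx0 hx0, sq_nonneg (x*s),
      mul_pos (mul_pos hx0 hx0) hx0]
  have hxr : x = s - 1 := by
    rcases mul_eq_zero.mp hfac with h1 | h1
    · linarith
    · linarith
  have h1x2 : 1 - x^2 = 2*s - 3 := by rw [hxr]; ring_nf; linarith [hs]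
  have h1x2_pos : (0:ℝ) < 1 - x^2 := by rw [h1x2]; linarith
  rw [Real.tan_arcsin]
  have hL_pos : 0 ≤ x / Real.sqrt (1 - x^2) :=
    div_nonneg hx0.le (Real.sqrt_nonneg _)
  have hsq : (x / Real.sqrt (1 - x^2))^2 = 2 / s := by
    rw [div_pow, Real.sq_sqrt h1x2_pos.le, h1x2, hxr]
    rw [div_eq_div_iff (by linarith : (2*s-3:ℝ) ≠ 0) (ne_of_gt hs_pos)]
    nlinarith [hs]
  calc x / Real.sqrt (1 - x^2)
      = Real.sqrt ((x / Real.sqrt (1 - x^2))^2) := (Real.sqrt_sq hL_pos).symm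
    _ = Real.sqrt (2 / s) := by rw [hsq]
end

section
/- For 0 < α < π/2 and k := sin α, ∫₀^∞ dt/√(1 + 2t² cos(2α) + t⁴) = K(k), where K(k) = ∫₀^1 dy/√((1 − y²)(1 − k² y²)). -/
open Real MeasureTheory Set

/-!
The substitution `t ↦ t⁻¹` maps `(1, ∞)` onto `(0, 1)` and leaves
`dt / √(1 + 2 t² (1 - 2k²) + t⁴)` invariant, so the integral over `(0, ∞)` is twice the integral
over `(0, 1)`. On `(0, 1)` the substitution `y = 2t / (1 + t²)` gives
`1 - y² = ((1 - t²) / (1 + t²))²` and `1 - k² y² = (1 + 2 t² (1 - 2k²) + t⁴) / (1 + t²)²`,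
which turns `dy / √((1 - y²)(1 - k² y²))` into `2 dt / √(1 + 2 t² (1 - 2k²) + t⁴)`.
With `k = sin α` one has `cos 2α = 1 - 2k²`.
-/

section InversionSymmetry

variable {E : Type*} [NormedAddCommGroup E] [NormedSpace ℝ E]

lemma image_inv_Ioo_zero_one : Inv.inv '' Ioo (0 : ℝ) 1 = Ioi 1 := by
  rw [image_inv_eq_inv, inv_Ioo_0_left one_pos, inv_one]

lemma integral_Ioi_eq_two_smul_integral_Ioo_of_inv_symm {f : ℝ → E}
    (hf : IntegrableOn f (Ioo 0 1))
    (hsymm : ∀ t ∈ Ioo (0 : ℝ) 1, (t ^ 2)⁻¹ • f t⁻¹ = f t) :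
    ∫ t in Ioi 0, f t = (2 : ℝ) • ∫ t in Ioo 0 1, f t := by
  have hderiv : ∀ t ∈ Ioo (0 : ℝ) 1, HasDerivWithinAt Inv.inv (-(t ^ 2)⁻¹) (Ioo 0 1) t :=
    fun t ht => (hasDerivAt_inv ht.1.ne').hasDerivWithinAt
  have hinj : InjOn Inv.inv (Ioo (0 : ℝ) 1) := inv_injective.injOn
  have hjac : EqOn (fun t => |-(t ^ 2)⁻¹| • f t⁻¹) f (Ioo 0 1) := fun t ht => by
    simpa only [abs_neg, abs_inv, abs_sq] using hsymm t ht
  have hf_Ioi : IntegrableOn f (Ioi 1) := by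
    rw [← image_inv_Ioo_zero_one,
      integrableOn_image_iff_integrableOn_abs_deriv_smul measurableSet_Ioo hderiv hinj]
    exact hf.congr_fun hjac.symm measurableSet_Ioo
  have hIoi : ∫ t in Ioi 1, f t = ∫ t in Ioo 0 1, f t := by
    rw [← image_inv_Ioo_zero_one,
      integral_image_eq_integral_abs_deriv_smul measurableSet_Ioo hderiv hinj]
    exact setIntegral_congr_fun measurableSet_Ioo hjac
  rw [← Ioo_union_Ici_eq_Ioi zero_lt_one,
    setIntegral_union (disjoint_left.2 fun _ hx hx' => hx.2.not_ge hx') measurableSet_Ici hf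
      ((integrableOn_Ici_iff_integrableOn_Ioi enorm_ne_top).2 hf_Ioi),
    integral_Ici_eq_integral_Ioi, hIoi, two_smul]

end InversionSymmetry

section HalfAngleSubstitution

lemma hasDerivAt_two_mul_div_one_add_sq (t : ℝ) :
    HasDerivAt (fun t : ℝ => 2 * t / (1 + t ^ 2)) ((2 - 2 * t ^ 2) / (1 + t ^ 2) ^ 2) t := by
  have hnum : HasDerivAt (fun t : ℝ => 2 * t) 2 t := by
    simpa using (hasDerivAt_id t).const_mul (2 : ℝ)
  have hden : HasDerivAt (fun t : ℝ => 1 + t ^ 2) (2 * t) t := by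
    simpa using (hasDerivAt_pow 2 t).const_add (1 : ℝ)
  exact (hnum.div hden (by positivity)).congr_deriv (by ring)

lemma injOn_two_mul_div_one_add_sq : InjOn (fun t : ℝ => 2 * t / (1 + t ^ 2)) (Icc (-1) 1) := by
  intro a ha b hb hab
  rw [div_eq_div_iff (by positivity) (by positivity)] at hab
  have hfactor : (a - b) * (1 - a * b) = 0 := by linear_combination hab / 2
  rcases mul_eq_zero.1 hfactor with h | h
  · linarith
  · nlinarith [ha.1, ha.2, hb.1, hb.2]

lemma image_two_mul_div_one_add_sq_Ioo_zero_one :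
    (fun t : ℝ => 2 * t / (1 + t ^ 2)) '' Ioo 0 1 = Ioo 0 1 := by
  refine Subset.antisymm ?_ ?_
  · rintro _ ⟨t, ⟨ht0, ht1⟩, rfl⟩
    have hden : 0 < 1 + t ^ 2 := by positivity
    exact ⟨by positivity, (div_lt_one hden).2 (by nlinarith)⟩
  · have hcont : ContinuousOn (fun t : ℝ => 2 * t / (1 + t ^ 2)) (Icc 0 1) :=
      fun t _ => (hasDerivAt_two_mul_div_one_add_sq t).continuousAt.continuousWithinAt
    have hivt := intermediate_value_Ioo zero_le_one hcont
    norm_num at hivt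
    exact hivt

variable {E : Type*} [NormedAddCommGroup E] [NormedSpace ℝ E]

lemma integral_Ioo_zero_one_eq_integral_comp_two_mul_div_one_add_sq (g : ℝ → E) :
    ∫ y in Ioo 0 1, g y =
      ∫ t in Ioo 0 1, ((2 - 2 * t ^ 2) / (1 + t ^ 2) ^ 2) • g (2 * t / (1 + t ^ 2)) := by
  conv_lhs => rw [← image_two_mul_div_one_add_sq_Ioo_zero_one]
  rw [integral_image_eq_integral_abs_deriv_smul measurableSet_Ioo
    (fun t _ => (hasDerivAt_two_mul_div_one_add_sq t).hasDerivWithinAt)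
    (injOn_two_mul_div_one_add_sq.mono
      (Ioo_subset_Icc_self.trans (Icc_subset_Icc_left (by norm_num))))]
  refine setIntegral_congr_fun measurableSet_Ioo fun t ht => ?_
  have hderiv_pos : 0 < (2 - 2 * t ^ 2) / (1 + t ^ 2) ^ 2 := by
    apply div_pos <;> nlinarith [ht.1, ht.2]
  simp only [abs_of_pos hderiv_pos]

end HalfAngleSubstitution

section EllipticIntegrand

variable {k : ℝ}

lemma one_add_two_mul_sq_mul_one_sub_add_pow_four_pos (hk : k ^ 2 < 1) (t : ℝ) :
    0 < 1 + 2 * t ^ 2 * (1 - 2 * k ^ 2) + t ^ 4 := by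
  nlinarith [sq_nonneg (t ^ 2 - 1), mul_nonneg (sq_nonneg t) (sub_pos.2 hk).le]

lemma inv_sq_mul_inv_sqrt_quartic_inv {t : ℝ} (ht : t ≠ 0) :
    (t ^ 2)⁻¹ * (1 / √(1 + 2 * t⁻¹ ^ 2 * (1 - 2 * k ^ 2) + t⁻¹ ^ 4)) =
      1 / √(1 + 2 * t ^ 2 * (1 - 2 * k ^ 2) + t ^ 4) := by
  have hquartic : 1 + 2 * t⁻¹ ^ 2 * (1 - 2 * k ^ 2) + t⁻¹ ^ 4 =
      (1 + 2 * t ^ 2 * (1 - 2 * k ^ 2) + t ^ 4) / (t ^ 2) ^ 2 := by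
    field_simp
    ring
  rw [hquartic, sqrt_div' _ (by positivity), sqrt_sq (by positivity)]
  field_simp

lemma deriv_mul_inv_sqrt_comp_two_mul_div_one_add_sq {t : ℝ} (ht : t ^ 2 < 1) :
    (2 - 2 * t ^ 2) / (1 + t ^ 2) ^ 2 *
        (1 / √((1 - (2 * t / (1 + t ^ 2)) ^ 2) * (1 - k ^ 2 * (2 * t / (1 + t ^ 2)) ^ 2))) =
      2 * (1 / √(1 + 2 * t ^ 2 * (1 - 2 * k ^ 2) + t ^ 4)) := by
  have hden : 0 < 1 + t ^ 2 := by positivity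
  have h_one_sub : 1 - (2 * t / (1 + t ^ 2)) ^ 2 = ((1 - t ^ 2) / (1 + t ^ 2)) ^ 2 := by
    field_simp
    ring
  have h_one_sub_mul : 1 - k ^ 2 * (2 * t / (1 + t ^ 2)) ^ 2 =
      (1 + 2 * t ^ 2 * (1 - 2 * k ^ 2) + t ^ 4) / (1 + t ^ 2) ^ 2 := by
    field_simp
    ring
  rw [h_one_sub, h_one_sub_mul, sqrt_mul (sq_nonneg _), sqrt_sq (div_pos (by linarith) hden).le,
    sqrt_div' _ (sq_nonneg _), sqrt_sq hden.le]
  have hsub : 1 - t ^ 2 ≠ 0 := by linarith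
  field_simp

end EllipticIntegrand

theorem integral_Ioi_inv_sqrt_quartic_eq_completeEllipticK {k : ℝ} (hk : k ^ 2 < 1) :
    ∫ t in Ioi (0 : ℝ), 1 / √(1 + 2 * t ^ 2 * (1 - 2 * k ^ 2) + t ^ 4) =
      ∫ y in (0 : ℝ)..1, 1 / √((1 - y ^ 2) * (1 - k ^ 2 * y ^ 2)) := by
  have hcont : Continuous fun t : ℝ => 1 / √(1 + 2 * t ^ 2 * (1 - 2 * k ^ 2) + t ^ 4) :=
    continuous_const.div (by fun_prop)
      fun t => (sqrt_pos.2 (one_add_two_mul_sq_mul_one_sub_add_pow_four_pos hk t)).ne'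
  rw [intervalIntegral.integral_of_le zero_le_one, integral_Ioc_eq_integral_Ioo,
    integral_Ioo_zero_one_eq_integral_comp_two_mul_div_one_add_sq,
    integral_Ioi_eq_two_smul_integral_Ioo_of_inv_symm
      (hcont.integrableOn_Icc.mono_set Ioo_subset_Icc_self)
      fun t ht => inv_sq_mul_inv_sqrt_quartic_inv ht.1.ne',
    ← integral_smul]
  refine setIntegral_congr_fun measurableSet_Ioo fun t ht => ?_
  exact (deriv_mul_inv_sqrt_comp_two_mul_div_one_add_sq (by nlinarith [ht.1, ht.2])).symm

theorem bowman_corollary (α : ℝ) (hα0 : 0 < α) (hα1 : α < π/2) :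
    ∫ t in Set.Ioi (0:ℝ), 1 / Real.sqrt (1 + 2 * t^2 * Real.cos (2*α) + t^4)
      = ∫ y in (0:ℝ)..1, 1 / Real.sqrt ((1 - y^2) * (1 - (Real.sin α)^2 * y^2)) := by
  have hcos : 0 < cos α := cos_pos_of_mem_Ioo ⟨by linarith [pi_pos], hα1⟩
  have hsin_sq : sin α ^ 2 < 1 := by nlinarith [sin_sq_add_cos_sq α]
  rw [cos_two_mul_eq_one_sub]
  exact integral_Ioi_inv_sqrt_quartic_eq_completeEllipticK hsin_sq
end

section
/- ∫₀^∞ dt/√(1 + √3·t² + t⁴) = K(½√(2 − √3)), where K is the complete elliptic integral of the first kind. -/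
/-!
Substituting `t = tan θ` turns `1 + 2(1 - 2k²)t² + t⁴` into `(1 - k² sin²(2θ)) / cos⁴θ`, so the
integral becomes `∫₀^{π/2} dθ / √(1 - k² sin²(2θ))`; since `sin²` is symmetric about `π/2`, the
doubled angle sweeps `[0, π]` as two copies of `[0, π/2]`, which gives `K(k)`. For
`k = sin(π/12)` one has `2(1 - 2k²) = 2 cos(π/6) = √3`.
-/

open Real MeasureTheory Set intervalIntegral

noncomputable def ellipticK (k : ℝ) : ℝ :=
  ∫ θ in (0:ℝ)..(π/2), 1 / √(1 - k ^ 2 * sin θ ^ 2)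

theorem integral_comp_two_mul_eq_of_symm {E : Type*} [NormedAddCommGroup E] [NormedSpace ℝ E]
    {f : ℝ → E} {a : ℝ} (hf : IntervalIntegrable f volume 0 a) (hsymm : ∀ x, f (a - x) = f x) :
    ∫ θ in (0:ℝ)..(a/2), f (2 * θ) = ∫ θ in (0:ℝ)..(a/2), f θ := by
  have hsecond : ∫ x in (a/2)..a, f x = ∫ x in (0:ℝ)..(a/2), f x := by
    simpa [hsymm, show a - a/2 = a/2 by ring] using
      (integral_comp_sub_left (a := (0:ℝ)) (b := a/2) f a).symm
  have hmid : a/2 ∈ uIcc 0 a := by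
    rw [mem_uIcc]; rcases le_total 0 a with h | h
    exacts [Or.inl ⟨by linarith, by linarith⟩, Or.inr ⟨by linarith, by linarith⟩]
  have hhalves : ∫ x in (0:ℝ)..a, f x = (2:ℝ) • ∫ x in (0:ℝ)..(a/2), f x := by
    rw [← integral_add_adjacent_intervals (hf.mono_set (uIcc_subset_uIcc_left hmid))
      (hf.mono_set (uIcc_subset_uIcc_right hmid)), hsecond, two_smul]
  rw [integral_comp_mul_left f two_ne_zero, mul_zero, mul_div_cancel₀ a two_ne_zero, hhalves,
    inv_smul_smul₀ two_ne_zero]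

theorem image_tan_Ioo_zero_pi_div_two : tan '' Ioo 0 (π/2) = Ioi 0 := by
  refine Subset.antisymm ?_ fun y hy => ?_
  · rintro _ ⟨θ, ⟨hθ₀, hθ₁⟩, rfl⟩
    exact tan_pos_of_pos_of_lt_pi_div_two hθ₀ hθ₁
  · exact ⟨arctan y, ⟨arctan_pos.2 hy, arctan_lt_pi_div_two y⟩, tan_arctan y⟩

theorem integral_Ioi_eq_setIntegral_comp_tan {E : Type*} [NormedAddCommGroup E]
    [NormedSpace ℝ E] (g : ℝ → E) :
    ∫ t in Ioi 0, g t = ∫ θ in Ioo 0 (π/2), (1 / cos θ ^ 2) • g (tan θ) := by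
  have hcos : ∀ θ ∈ Ioo 0 (π/2), cos θ ≠ 0 := fun θ hθ =>
    (cos_pos_of_mem_Ioo ⟨by linarith [hθ.1, pi_pos], hθ.2⟩).ne'
  have hderiv : ∀ θ ∈ Ioo 0 (π/2), HasDerivWithinAt tan (1 / cos θ ^ 2) (Ioo 0 (π/2)) θ :=
    fun θ hθ => (hasDerivAt_tan (hcos θ hθ)).hasDerivWithinAt
  have hinj : InjOn tan (Ioo 0 (π/2)) :=
    injOn_tan.mono (Ioo_subset_Ioo (by linarith [pi_pos]) le_rfl)
  rw [← image_tan_Ioo_zero_pi_div_two,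
    integral_image_eq_integral_abs_deriv_smul measurableSet_Ioo hderiv hinj]
  congr with θ
  rw [abs_of_nonneg (by positivity)]

theorem one_add_mul_tan_sq_add_tan_pow_four (m θ : ℝ) (h : cos θ ≠ 0) :
    1 + 2 * (1 - 2 * m) * tan θ ^ 2 + tan θ ^ 4
      = (1 - m * sin (2 * θ) ^ 2) * (1 / cos θ ^ 2) ^ 2 := by
  rw [tan_eq_sin_div_cos, sin_two_mul]
  field_simp
  linear_combination (sin θ ^ 2 + cos θ ^ 2 + 1) * sin_sq_add_cos_sq θ

theorem one_div_cos_sq_mul_one_div_sqrt_quartic_tan (m θ : ℝ) (h : cos θ ≠ 0) :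
    1 / cos θ ^ 2 * (1 / √(1 + 2 * (1 - 2 * m) * tan θ ^ 2 + tan θ ^ 4))
      = 1 / √(1 - m * sin (2 * θ) ^ 2) := by
  rw [one_add_mul_tan_sq_add_tan_pow_four m θ h, sqrt_mul' _ (sq_nonneg _),
    sqrt_sq (by positivity)]
  field_simp

theorem continuous_one_div_sqrt_one_sub_mul_sin_sq {m : ℝ} (hm : m < 1) :
    Continuous fun θ => 1 / √(1 - m * sin θ ^ 2) := by
  have hpos : ∀ θ, 0 < 1 - m * sin θ ^ 2 := fun θ => by
    rcases le_or_gt m 0 with hm₀ | hm₀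
    · nlinarith [sq_nonneg (sin θ)]
    · nlinarith [sin_sq_le_one θ]
  exact continuous_const.div (by fun_prop) fun θ => (sqrt_pos.2 (hpos θ)).ne'

theorem integral_Ioi_one_div_sqrt_quartic_eq_ellipticK {k : ℝ} (hk : k ^ 2 < 1) :
    ∫ t in Ioi 0, 1 / √(1 + 2 * (1 - 2 * k ^ 2) * t ^ 2 + t ^ 4) = ellipticK k := by
  calc _ = ∫ θ in Ioo 0 (π/2), 1 / √(1 - k ^ 2 * sin (2 * θ) ^ 2) := by
        rw [integral_Ioi_eq_setIntegral_comp_tan]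
        refine setIntegral_congr_fun measurableSet_Ioo fun θ hθ => ?_
        exact one_div_cos_sq_mul_one_div_sqrt_quartic_tan _ θ
          (cos_pos_of_mem_Ioo ⟨by linarith [hθ.1, pi_pos], hθ.2⟩).ne'
    _ = ∫ θ in (0:ℝ)..(π/2), 1 / √(1 - k ^ 2 * sin (2 * θ) ^ 2) := by
        rw [integral_of_le (by positivity), integral_Ioc_eq_integral_Ioo]
    _ = ellipticK k :=
        integral_comp_two_mul_eq_of_symm
          ((continuous_one_div_sqrt_one_sub_mul_sin_sq hk).intervalIntegrable _ _)
          fun x => by rw [sin_pi_sub]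

theorem integral_eq_K_sin15 :
    ∫ t in Set.Ioi (0:ℝ), 1 / Real.sqrt (1 + Real.sqrt 3 * t^2 + t^4)
      = ∫ θ in (0:ℝ)..(π/2),
          1 / Real.sqrt (1 - ((1/2) * Real.sqrt (2 - Real.sqrt 3))^2 * Real.sin θ ^ 2) := by
  have hsqrt3 : √3 < 2 := by
    nlinarith [sq_sqrt (show (0:ℝ) ≤ 3 by norm_num), sqrt_nonneg 3]
  have hk : ((1/2) * √(2 - √3)) ^ 2 = (2 - √3) / 4 := by
    rw [mul_pow, sq_sqrt (by linarith)]
    ring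
  have hcoef : 2 * (1 - 2 * ((1/2) * √(2 - √3)) ^ 2) = √3 := by
    rw [hk]
    ring
  have h := integral_Ioi_one_div_sqrt_quartic_eq_ellipticK (k := (1/2) * √(2 - √3))
    (by rw [hk]; linarith [sqrt_nonneg 3])
  rwa [hcoef] at h
end

section
/- The integral R := ∫₀^1 dx/(1 − x³)^{2/3} equals ∫₀^∞ dy/√(4y³ + 1). -/
/-!
Substitute `y = x / (1 - x³)^{2/3}`, i.e. `(x/y)^{3/2} = 1 - x³`. Then
`4y³ + 1 = ((1 + x³) / (1 - x³))²` and `dy/dx = ((1 + x³) / (1 - x³)) / (1 - x³)^{2/3}`,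
so `dy / √(4y³ + 1) = dx / (1 - x³)^{2/3}`; the substitution maps `(0, 1)` increasingly onto
`(0, ∞)`.
-/

open Real Set Filter Topology MeasureTheory

theorem Ioi_subset_image_Ioo_of_tendsto_atTop {α δ : Type*} [ConditionallyCompleteLinearOrder α]
    [TopologicalSpace α] [OrderTopology α] [DenselyOrdered α] [LinearOrder δ]
    [TopologicalSpace δ] [OrderClosedTopology δ] {f : α → δ} {a b : α} (hab : a < b)
    (hf : ContinuousOn f (Ico a b)) (htop : Tendsto f (𝓝[<] b) atTop) :
    Ioi (f a) ⊆ f '' Ioo a b := by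
  intro y hy
  have := nhdsLT_neBot_of_exists_lt ⟨a, hab⟩
  obtain ⟨c, hyc, hac, hcb⟩ :=
    ((htop.eventually_ge_atTop y).and (Ioo_mem_nhdsLT hab)).exists
  obtain ⟨x, hx, rfl⟩ := intermediate_value_Ioc hac.le
    (hf.mono fun z hz => ⟨hz.1, hz.2.trans_lt hcb⟩) ⟨hy, hyc⟩
  exact ⟨x, ⟨hx.1, hx.2.trans_lt hcb⟩, rfl⟩

theorem one_sub_pow_three_pos {x : ℝ} (hx : x < 1) : 0 < 1 - x ^ 3 := by
  have : x ^ 3 < 1 ^ 3 := Odd.strictMono_pow (by decide) hx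
  linarith [one_pow (M := ℝ) 3]

theorem continuous_one_sub_pow_three_rpow {p : ℝ} (hp : 0 ≤ p) :
    Continuous fun x : ℝ => (1 - x ^ 3) ^ p :=
  (continuous_const.sub (continuous_pow 3)).rpow_const fun _ => Or.inr hp

noncomputable def cubeSubst (x : ℝ) : ℝ := x / (1 - x ^ 3) ^ ((2 : ℝ) / 3)

theorem cubeSubst_pos {x : ℝ} (hx : x ∈ Ioo (0 : ℝ) 1) : 0 < cubeSubst x :=
  div_pos hx.1 (rpow_pos_of_pos (one_sub_pow_three_pos hx.2) _)

theorem continuousOn_cubeSubst : ContinuousOn cubeSubst (Iio 1) :=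
  continuousOn_id.div (continuous_one_sub_pow_three_rpow (by norm_num)).continuousOn
    fun _ hx => (rpow_pos_of_pos (one_sub_pow_three_pos hx) _).ne'

theorem four_mul_cubeSubst_pow_three_add_one {x : ℝ} (hx : x < 1) :
    4 * cubeSubst x ^ 3 + 1 = ((1 + x ^ 3) / (1 - x ^ 3)) ^ 2 := by
  have ht := one_sub_pow_three_pos hx
  have hcube : ((1 - x ^ 3) ^ ((2 : ℝ) / 3)) ^ 3 = (1 - x ^ 3) ^ 2 := by
    rw [← rpow_natCast, ← rpow_mul ht.le]
    norm_num
  rw [cubeSubst, div_pow, hcube]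
  field_simp
  ring

theorem hasDerivAt_cubeSubst {x : ℝ} (hx : x < 1) :
    HasDerivAt cubeSubst (((1 + x ^ 3) / (1 - x ^ 3)) / (1 - x ^ 3) ^ ((2 : ℝ) / 3)) x := by
  have ht := one_sub_pow_three_pos hx
  have hden : HasDerivAt (fun x : ℝ => (1 - x ^ 3) ^ ((2 : ℝ) / 3))
      ((2 / 3) * (1 - x ^ 3) ^ ((2 : ℝ) / 3 - 1) * (-(3 * x ^ 2))) x := by
    convert ((hasDerivAt_pow 3 x).const_sub 1).rpow_const (p := (2 : ℝ) / 3) (Or.inl ht.ne')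
      using 1
    simp only [Nat.cast_ofNat]
    ring
  refine ((hasDerivAt_id x).div hden (rpow_pos_of_pos ht _).ne').congr_deriv ?_
  rw [id, rpow_sub_one ht.ne']
  field_simp
  ring

theorem strictMonoOn_cubeSubst : StrictMonoOn cubeSubst (Ioo 0 1) := by
  refine strictMonoOn_of_hasDerivWithinAt_pos (convex_Ioo 0 1)
    (f' := fun x => ((1 + x ^ 3) / (1 - x ^ 3)) / (1 - x ^ 3) ^ ((2 : ℝ) / 3))
    (continuousOn_cubeSubst.mono fun _ hx => hx.2) (fun x hx => ?_) (fun x hx => ?_)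
  all_goals rw [interior_Ioo] at hx
  · exact (hasDerivAt_cubeSubst hx.2).hasDerivWithinAt
  · have ht := one_sub_pow_three_pos hx.2
    have := pow_pos hx.1 3
    positivity

theorem tendsto_cubeSubst_atTop : Tendsto cubeSubst (𝓝[<] 1) atTop := by
  have hden : Tendsto (fun x : ℝ => (1 - x ^ 3) ^ ((2 : ℝ) / 3)) (𝓝[<] 1) (𝓝[>] 0) := by
    refine tendsto_nhdsWithin_iff.2 ⟨?_, ?_⟩
    · have h := (continuous_one_sub_pow_three_rpow (p := (2 : ℝ) / 3) (by norm_num)).tendsto 1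
      simpa using h.mono_left nhdsWithin_le_nhds
    · filter_upwards [self_mem_nhdsWithin] with x hx
      exact rpow_pos_of_pos (one_sub_pow_three_pos hx) _
  exact (tendsto_nhdsWithin_of_tendsto_nhds tendsto_id).pos_mul_atTop one_pos
    hden.inv_tendsto_nhdsGT_zero

theorem image_cubeSubst_Ioo : cubeSubst '' Ioo 0 1 = Ioi 0 := by
  refine (image_subset_iff.2 fun _ hx => cubeSubst_pos hx).antisymm ?_
  have := Ioi_subset_image_Ioo_of_tendsto_atTop one_pos
    (continuousOn_cubeSubst.mono fun _ hx => hx.2) tendsto_cubeSubst_atTop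
  rwa [show cubeSubst 0 = 0 by simp [cubeSubst]] at this

theorem R_first_form :
    ∫ x in (0:ℝ)..1, 1 / (1 - x^3) ^ ((2:ℝ)/3)
      = ∫ y in Set.Ioi (0:ℝ), 1 / Real.sqrt (4 * y^3 + 1) := by
  rw [intervalIntegral.integral_of_le zero_le_one, integral_Ioc_eq_integral_Ioo,
    ← image_cubeSubst_Ioo, integral_image_eq_integral_abs_deriv_smul measurableSet_Ioo
      (fun x hx => (hasDerivAt_cubeSubst hx.2).hasDerivWithinAt) strictMonoOn_cubeSubst.injOn]
  refine setIntegral_congr_fun measurableSet_Ioo fun x hx => ?_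
  have ht := one_sub_pow_three_pos hx.2
  have hp : 0 < 1 + x ^ 3 := by have := pow_pos hx.1 3; positivity
  have hs : 0 < (1 + x ^ 3) / (1 - x ^ 3) := div_pos hp ht
  rw [four_mul_cubeSubst_pow_three_add_one hx.2, sqrt_sq hs.le, smul_eq_mul,
    abs_of_pos (div_pos hs (rpow_pos_of_pos ht _))]
  field_simp
end

section
/- The integral R := ∫₀^1 dx/(1 − x³)^{2/3} equals √3 · ∫₁^∞ dy/√(4y³ − 1). -/
/-!
The substitution `(1 - x/y)³ = 1 - x³` is the birational map from the Fermat cubic `x³ + c³ = 1`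
to the Weierstrass curve `w² = 4y³ - 1` given by `y = x / (1 - c)`, `w = √3 (1 + c) / (1 - c)`.
On `0 < x < 1` it is a decreasing bijection onto `y > 1`, with `dy/dx = -(1 + c) / ((1 - c) c²)`;
hence `dy / w = -dx / (√3 c²)`, and `c² = (1 - x³)^(2/3)`.
-/

open Real Set MeasureTheory

namespace FermatCubic

noncomputable def cubeCompl (x : ℝ) : ℝ := (1 - x ^ 3) ^ (3⁻¹ : ℝ)

lemma cubeCompl_eq {x c : ℝ} (hc : 0 ≤ c) (h : x ^ 3 + c ^ 3 = 1) : cubeCompl x = c := by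
  rw [cubeCompl, show 1 - x ^ 3 = c ^ 3 by linarith]
  exact_mod_cast pow_rpow_inv_natCast hc three_ne_zero

lemma cubeCompl_pow_three {x : ℝ} (hx : x ^ 3 ≤ 1) : cubeCompl x ^ 3 = 1 - x ^ 3 := by
  exact_mod_cast rpow_inv_natCast_pow (sub_nonneg.2 hx) three_ne_zero

lemma pow_three_add_cubeCompl_pow_three {x : ℝ} (hx : x ^ 3 ≤ 1) :
    x ^ 3 + cubeCompl x ^ 3 = 1 := by
  rw [cubeCompl_pow_three hx]
  ring

lemma cubeCompl_cubeCompl {x : ℝ} (hx0 : 0 ≤ x) (hx1 : x ^ 3 ≤ 1) :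
    cubeCompl (cubeCompl x) = x :=
  cubeCompl_eq hx0 <| by rw [add_comm]; exact pow_three_add_cubeCompl_pow_three hx1

lemma cubeCompl_sq {x : ℝ} (hx : x ^ 3 ≤ 1) :
    cubeCompl x ^ 2 = (1 - x ^ 3) ^ ((2 : ℝ) / 3) := by
  rw [cubeCompl, ← rpow_natCast, ← rpow_mul (sub_nonneg.2 hx)]
  norm_num

lemma cubeCompl_mem_Ioo {x : ℝ} (hx : x ∈ Ioo (0 : ℝ) 1) :
    cubeCompl x ∈ Ioo (0 : ℝ) 1 := by
  have hx3 : x ^ 3 < 1 := pow_lt_one₀ hx.1.le hx.2 three_ne_zero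
  have hx3' : 0 < x ^ 3 := pow_pos hx.1 3
  exact ⟨rpow_pos_of_pos (by linarith) _, rpow_lt_one (by linarith) (by linarith) (by norm_num)⟩

lemma hasDerivAt_cubeCompl {x : ℝ} (hx : x ^ 3 < 1) :
    HasDerivAt cubeCompl (-x ^ 2 / cubeCompl x ^ 2) x := by
  have hbase : 1 - x ^ 3 ≠ 0 := by linarith
  have hc : cubeCompl x ≠ 0 := (rpow_pos_of_pos (by linarith) _).ne'
  refine (((hasDerivAt_pow 3 x).const_sub 1).rpow_const (p := (3⁻¹ : ℝ)) (Or.inl hbase)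
    : HasDerivAt cubeCompl _ x).congr_deriv ?_
  rw [rpow_sub_one hbase, ← cubeCompl, ← cubeCompl_pow_three hx.le]
  field_simp
  push_cast
  ring

lemma one_lt_add_of_pow_three_add_pow_three_eq_one {x c : ℝ} (hx : 0 < x) (hc : 0 < c)
    (h : x ^ 3 + c ^ 3 = 1) : 1 < x + c := by
  nlinarith [pow_pos hx 3, pow_pos hc 3, mul_pos hx hc, sq_nonneg (x - c)]

lemma four_mul_div_pow_three_sub_one {x c : ℝ} (h : x ^ 3 + c ^ 3 = 1) (hc : c ≠ 1) :
    4 * (x / (1 - c)) ^ 3 - 1 = 3 * ((1 + c) / (1 - c)) ^ 2 := by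
  have : 1 - c ≠ 0 := sub_ne_zero.2 hc.symm
  field_simp
  linear_combination 4 * h

noncomputable def fermatSubst (x : ℝ) : ℝ := x / (1 - cubeCompl x)

lemma one_lt_fermatSubst {x : ℝ} (hx : x ∈ Ioo (0 : ℝ) 1) : 1 < fermatSubst x := by
  have hc := cubeCompl_mem_Ioo hx
  rw [fermatSubst, one_lt_div (by linarith [hc.2])]
  have := one_lt_add_of_pow_three_add_pow_three_eq_one hx.1 hc.1
    (pow_three_add_cubeCompl_pow_three (pow_le_one₀ hx.1.le hx.2.le))
  linarith

lemma hasDerivAt_fermatSubst {x : ℝ} (hx : x ∈ Ioo (0 : ℝ) 1) :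
    HasDerivAt fermatSubst
      (-(1 + cubeCompl x) / ((1 - cubeCompl x) * cubeCompl x ^ 2)) x := by
  have hx3 : x ^ 3 < 1 := pow_lt_one₀ hx.1.le hx.2 three_ne_zero
  obtain ⟨hc0, hc1⟩ := cubeCompl_mem_Ioo hx
  have hden : 1 - cubeCompl x ≠ 0 := by linarith
  refine (((hasDerivAt_id' x).div ((hasDerivAt_cubeCompl hx3).const_sub 1) hden
    : HasDerivAt fermatSubst _ x)).congr_deriv ?_
  have := pow_three_add_cubeCompl_pow_three hx3.le
  field_simp
  linear_combination (-1) * this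

lemma strictAntiOn_fermatSubst : StrictAntiOn fermatSubst (Ioo (0 : ℝ) 1) := by
  refine strictAntiOn_of_deriv_neg (convex_Ioo 0 1)
    (fun x hx ↦ (hasDerivAt_fermatSubst hx).continuousAt.continuousWithinAt) fun x hx ↦ ?_
  rw [interior_Ioo] at hx
  obtain ⟨hc0, hc1⟩ := cubeCompl_mem_Ioo hx
  rw [(hasDerivAt_fermatSubst hx).deriv, neg_div]
  exact neg_neg_of_pos (div_pos (by linarith) (mul_pos (by linarith) (by positivity)))

lemma sqrt_four_mul_fermatSubst_pow_three_sub_one {x : ℝ} (hx : x ∈ Ioo (0 : ℝ) 1) :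
    √(4 * fermatSubst x ^ 3 - 1) = √3 * ((1 + cubeCompl x) / (1 - cubeCompl x)) := by
  obtain ⟨hc0, hc1⟩ := cubeCompl_mem_Ioo hx
  rw [fermatSubst, four_mul_div_pow_three_sub_one
      (pow_three_add_cubeCompl_pow_three (pow_le_one₀ hx.1.le hx.2.le)) hc1.ne,
    sqrt_mul zero_le_three, sqrt_sq (div_pos (by linarith) (by linarith)).le]

lemma image_fermatSubst_Ioo : fermatSubst '' Ioo (0 : ℝ) 1 = Ioi 1 := by
  refine (image_subset_iff.2 fun x hx ↦ one_lt_fermatSubst hx).antisymm fun z (hz : 1 < z) ↦ ?_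
  set t := √((4 * z ^ 3 - 1) / 3)
  have hz3 : 1 < z ^ 3 := one_lt_pow₀ hz three_ne_zero
  have ht2 : t ^ 2 = (4 * z ^ 3 - 1) / 3 := sq_sqrt (by linarith)
  have ht : 1 < t := by nlinarith [sqrt_nonneg ((4 * z ^ 3 - 1) / 3)]
  set c := (t - 1) / (t + 1) with hc_def
  have hc : c ∈ Ioo (0 : ℝ) 1 :=
    ⟨div_pos (by linarith) (by linarith), (div_lt_one (by linarith)).2 (by linarith)⟩
  have hct : (1 + c) / (1 - c) = t := by
    have : t + 1 ≠ 0 := by linarith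
    rw [hc_def]
    field_simp
    ring
  have hx := cubeCompl_mem_Ioo hc
  have hxc := cubeCompl_cubeCompl hc.1.le (pow_le_one₀ hc.1.le hc.2.le)
  refine ⟨cubeCompl c, hx, ?_⟩
  have hy3 := one_lt_pow₀ (one_lt_fermatSubst hx) three_ne_zero
  have hsq := sqrt_four_mul_fermatSubst_pow_three_sub_one hx
  rw [hxc, hct, ← sq_eq_sq₀ (sqrt_nonneg _) (by positivity), mul_pow, sq_sqrt zero_le_three,
    sq_sqrt (by linarith), ht2] at hsq
  exact (Odd.strictMono_pow (by decide : Odd 3)).injective (by linarith)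

lemma sqrt_three_mul_abs_deriv_fermatSubst_div_sqrt {x : ℝ} (hx : x ∈ Ioo (0 : ℝ) 1) :
    √3 * (|-(1 + cubeCompl x) / ((1 - cubeCompl x) * cubeCompl x ^ 2)|
      * (1 / √(4 * fermatSubst x ^ 3 - 1))) = 1 / (1 - x ^ 3) ^ ((2 : ℝ) / 3) := by
  obtain ⟨hc0, hc1⟩ := cubeCompl_mem_Ioo hx
  have h1c : 0 < 1 - cubeCompl x := by linarith
  rw [sqrt_four_mul_fermatSubst_pow_three_sub_one hx,
    ← cubeCompl_sq (pow_le_one₀ hx.1.le hx.2.le), neg_div, abs_neg, abs_of_pos (by positivity)]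
  have : √3 ≠ 0 := by positivity
  field_simp

end FermatCubic

open FermatCubic in
theorem R_second_form :
    ∫ x in (0:ℝ)..1, 1 / (1 - x^3) ^ ((2:ℝ)/3)
      = Real.sqrt 3 * ∫ y in Set.Ioi (1:ℝ), 1 / Real.sqrt (4 * y^3 - 1) := by
  have cov := integral_image_eq_integral_abs_deriv_smul measurableSet_Ioo
    (fun x hx ↦ (hasDerivAt_fermatSubst hx).hasDerivWithinAt) strictAntiOn_fermatSubst.injOn
    fun y ↦ 1 / √(4 * y ^ 3 - 1)
  rw [image_fermatSubst_Ioo] at cov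
  rw [intervalIntegral.integral_of_le zero_le_one, integral_Ioc_eq_integral_Ioo, cov,
    ← integral_const_mul]
  exact setIntegral_congr_fun measurableSet_Ioo fun x hx ↦
    (sqrt_three_mul_abs_deriv_fermatSubst_div_sqrt hx).symm
end
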